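/- Let D be a smooth projective surface, C and C' distinct irreducible curves on D with C² = (C')² = 1 − d < 0, and suppose an effective Q-divisor B on D satisfies B ∼_Q r(C + C') for a rational number 0 < r < 1. Write B = aC + a'C' + Δ with Δ effective not containing C or C'. If a ≥ 1, then a contradiction follows; more precisely, the relations force a' ≥ r and then Δ = 0 and a = a' = r, contradicting a ≥ 1 > r. -/
import Mathlib

/-- Negative-curve argument on a smooth projective surface `D`.  We work in the
`ℚ`-vector space `M` of numerical divisor classes with intersection form `i`.
`C` and `C'` are classes of distinct irreducible curves with
`C² = C'² = 1 - d < 0` and `C·C' ≥ 0`, `A` is an ample class (so `A·C > 0`,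
`A·C' ≥ 0`, and `A·Δ > 0` for any nonzero effective `Δ`), and an effective
`ℚ`-divisor `B = a•C + a'•C' + Δ` (with `Δ` effective not containing `C`, `C'`,
hence `Δ·C ≥ 0`, `Δ·C' ≥ 0`, `Δ·A ≥ 0`) is `ℚ`-equivalent to `r•(C + C')` with
`0 < r < 1`.  Then `a ≥ 1` leads to a contradiction. -/
theorem negative_curve_contradiction
    (M : Type*) [AddCommGroup M] [Module ℚ M]
    (i : M →ₗ[ℚ] M →ₗ[ℚ] ℚ) (isymm : ∀ x y, i x y = i y x)
    (C C' Δ A : M) (a a' r : ℚ) (d : ℚ)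
    (hCC : i C C = 1 - d) (hC'C' : i C' C' = 1 - d) (hneg : 1 - d < 0)
    (hCC' : 0 ≤ i C C')
    (hΔC : 0 ≤ i Δ C) (hΔC' : 0 ≤ i Δ C')
    (hAC : 0 < i A C) (hAC' : 0 ≤ i A C') (hAΔ : 0 ≤ i A Δ)
    (ha : 0 ≤ a) (ha' : 0 ≤ a')
    (hr0 : 0 < r) (hr1 : r < 1)
    (hB : a • C + a' • C' + Δ = r • (C + C'))
    (ha1 : 1 ≤ a) :
    False := by
  have hΔ : Δ = (r - a) • C + (r - a') • C' := by
    linear_combination (norm := module) hB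
  have h1 : i Δ C' = (r - a) * i C C' + (r - a') * (1 - d) := by
    rw [hΔ]; simp [isymm C C', hC'C']
  have h2 : i A Δ = (r - a) * i A C + (r - a') * i A C' := by
    rw [hΔ]; simp
  -- a' ≥ r
  have ha'r : r ≤ a' := by nlinarith
  nlinarith
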